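/- Let x : I × J → ℝ^m be non-degenerate, i.e., the set of entries {x_{ij} : i ∈ I, j ∈ J} has at least three distinct elements, and let Q(z) := −‖z‖². Then the following three statements are equivalent: (U1) for every weight matrix w, if C_W(Q) ≤ R_W(Q) then C_W(F) ≤ R_W(F) for every function F : ℝ^m → ℝ that is concave on the convex hull of the entries of x; (U2) for every weight matrix w, if C_W(Q) ≤ R_W(Q) then C_W(Q) = E_W(Q); (U3) for every weight matrix w, if C_W(Q) ≤ R_W(Q) then C_W(F) = E_W(F) ≤ R_W(F) for every function F : ℝ^m → ℝ that is concave on the convex hull of the entries of x. -/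

import Mathlib

open scoped BigOperators Classical
open scoped RealInnerProductSpace
set_option linter.unusedSectionVars false

noncomputable section

variable {I J : Type*} [Fintype I] [Fintype J] {m : ℕ}

/-- Row marginal `w_{i·}`. -/
def rowMarg (w : I → J → ℝ) (i : I) : ℝ := ∑ j, w i j

/-- Column marginal `w_{·j}`. -/
def colMarg (w : I → J → ℝ) (j : J) : ℝ := ∑ i, w i j

/-- Row average `r_i`. -/
def rowAvg (x : I → J → EuclideanSpace ℝ (Fin m)) (w : I → J → ℝ) (i : I) :
    EuclideanSpace ℝ (Fin m) := (rowMarg w i)⁻¹ • ∑ j, w i j • x i j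

/-- Column average `c_j`. -/
def colAvg (x : I → J → EuclideanSpace ℝ (Fin m)) (w : I → J → ℝ) (j : J) :
    EuclideanSpace ℝ (Fin m) := (colMarg w j)⁻¹ • ∑ i, w i j • x i j

/-- `E_W(F)`, the overall weighted average of `F` on the entries. -/
def EW (x : I → J → EuclideanSpace ℝ (Fin m)) (w : I → J → ℝ)
    (F : EuclideanSpace ℝ (Fin m) → ℝ) : ℝ := ∑ i, ∑ j, w i j * F (x i j)

/-- `R_W(F)`, the weighted average of `F` on the row averages. -/
def RW (x : I → J → EuclideanSpace ℝ (Fin m)) (w : I → J → ℝ)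
    (F : EuclideanSpace ℝ (Fin m) → ℝ) : ℝ :=
  ∑ i ∈ Finset.univ.filter (fun i => 0 < rowMarg w i), rowMarg w i * F (rowAvg x w i)

/-- `C_W(F)`, the weighted average of `F` on the column averages. -/
def CW (x : I → J → EuclideanSpace ℝ (Fin m)) (w : I → J → ℝ)
    (F : EuclideanSpace ℝ (Fin m) → ℝ) : ℝ :=
  ∑ j ∈ Finset.univ.filter (fun j => 0 < colMarg w j), colMarg w j * F (colAvg x w j)

/-- `w` is a weight matrix. -/
def IsWeight (w : I → J → ℝ) : Prop := (∀ i j, 0 ≤ w i j) ∧ ∑ i, ∑ j, w i j = 1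

/-- The set of entries of the matrix `x`. -/
def entries (x : I → J → EuclideanSpace ℝ (Fin m)) : Set (EuclideanSpace ℝ (Fin m)) :=
  {v | ∃ i j, x i j = v}

/-- `x` is `W`-column-constant. -/
def WColConst (x : I → J → EuclideanSpace ℝ (Fin m)) (w : I → J → ℝ) : Prop :=
  ∀ i i' j, 0 < w i j → 0 < w i' j → x i j = x i' j

/-- `x` is `W`-row-constant. -/
def WRowConst (x : I → J → EuclideanSpace ℝ (Fin m)) (w : I → J → ℝ) : Prop :=
  ∀ i j j', 0 < w i j → 0 < w i j' → x i j = x i j'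

section lemmas
variable (x : I → J → EuclideanSpace ℝ (Fin m)) (w : I → J → ℝ)

lemma CW_flip (F : EuclideanSpace ℝ (Fin m) → ℝ) :
    CW (fun j i => x i j) (fun j i => w i j) F = RW x w F := rfl

lemma EW_flip (F : EuclideanSpace ℝ (Fin m) → ℝ) :
    EW (fun j i => x i j) (fun j i => w i j) F = EW x w F := Finset.sum_comm

lemma IsWeight.flip (hw : IsWeight w) : IsWeight (fun j i => w i j) :=
  ⟨fun j i => hw.1 i j, by rw [Finset.sum_comm]; exact hw.2⟩

lemma colMarg_nonneg (hw : ∀ i j, 0 ≤ w i j) (j : J) : 0 ≤ colMarg w j :=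
  Finset.sum_nonneg fun i _ => hw i j

lemma colMarg_zero (hw : ∀ i j, 0 ≤ w i j) (j : J) (h : ¬ 0 < colMarg w j) (i : I) :
    w i j = 0 := by
  have h0 : colMarg w j = 0 := le_antisymm (not_lt.1 h) (colMarg_nonneg w hw j)
  exact (Finset.sum_eq_zero_iff_of_nonneg (fun i _ => hw i j)).1 h0 i (Finset.mem_univ i)

lemma colMarg_pos_of_w_pos (hw : ∀ i j, 0 ≤ w i j) {i : I} {j : J} (h : 0 < w i j) :
    0 < colMarg w j := by
  by_contra hc
  exact absurd (colMarg_zero w hw j hc i) (ne_of_gt h)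

lemma sum_smul_col (j : J) (h : colMarg w j ≠ 0) :
    ∑ i, w i j • x i j = colMarg w j • colAvg x w j := (smul_inv_smul₀ h _).symm

lemma col_var_identity (j : J) (h : 0 < colMarg w j) :
    ∑ i, w i j * ‖x i j - colAvg x w j‖^2
      = ∑ i, w i j * ‖x i j‖^2 - colMarg w j * ‖colAvg x w j‖^2 := by
  have hS := sum_smul_col x w j h.ne'
  set c := colAvg x w j with hc
  have h2 : ∑ i, w i j * ⟪x i j, c⟫ = colMarg w j * ‖c‖^2 := by
    have e : ∑ i, w i j * ⟪x i j, c⟫ = ⟪∑ i, w i j • x i j, c⟫ := by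
      rw [sum_inner]
      exact Finset.sum_congr rfl fun i _ => (real_inner_smul_left _ _ _).symm
    rw [e, hS, real_inner_smul_left, real_inner_self_eq_norm_sq]
  calc ∑ i, w i j * ‖x i j - c‖^2
      = ∑ i, (w i j * ‖x i j‖^2 - 2*(w i j * ⟪x i j, c⟫) + w i j * ‖c‖^2) := by
        refine Finset.sum_congr rfl fun i _ => ?_
        rw [norm_sub_sq_real]; ring
    _ = (∑ i, w i j * ‖x i j‖^2) - 2*(∑ i, w i j * ⟪x i j, c⟫)
          + (∑ i, w i j) * ‖c‖^2 := by
        rw [Finset.sum_add_distrib, Finset.sum_sub_distrib, Finset.mul_sum, Finset.sum_mul]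
    _ = ∑ i, w i j * ‖x i j‖^2 - colMarg w j * ‖c‖^2 := by
        rw [h2]; unfold colMarg; ring

lemma CW_sub_EW (hw : ∀ i j, 0 ≤ w i j) (Q : EuclideanSpace ℝ (Fin m) → ℝ)
    (hQ : ∀ z, Q z = -‖z‖^2) :
    CW x w Q - EW x w Q
      = ∑ j ∈ Finset.univ.filter (fun j => 0 < colMarg w j),
          ∑ i, w i j * ‖x i j - colAvg x w j‖^2 := by
  have hE : EW x w Q = ∑ j, ∑ i, w i j * Q (x i j) := Finset.sum_comm
  rw [hE, ← Finset.sum_filter_add_sum_filter_not Finset.univ (fun j => 0 < colMarg w j)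
      (fun j => ∑ i, w i j * Q (x i j))]
  have hrest : ∑ j ∈ Finset.univ.filter (fun j => ¬ 0 < colMarg w j),
      ∑ i, w i j * Q (x i j) = 0 := by
    refine Finset.sum_eq_zero fun j hj => Finset.sum_eq_zero fun i _ => ?_
    rw [colMarg_zero w hw j (Finset.mem_filter.1 hj).2 i, zero_mul]
  rw [hrest, add_zero]
  unfold CW
  rw [← Finset.sum_sub_distrib]
  refine Finset.sum_congr rfl fun j hj => ?_
  have hjpos : 0 < colMarg w j := (Finset.mem_filter.1 hj).2
  rw [col_var_identity x w j hjpos]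
  simp only [hQ]
  have : ∑ i, w i j * -‖x i j‖^2 = -∑ i, w i j * ‖x i j‖^2 := by
    rw [← Finset.sum_neg_distrib]
    exact Finset.sum_congr rfl fun i _ => by ring
  rw [this]; ring

lemma EW_le_CW_Q (hw : ∀ i j, 0 ≤ w i j) (Q : EuclideanSpace ℝ (Fin m) → ℝ)
    (hQ : ∀ z, Q z = -‖z‖^2) : EW x w Q ≤ CW x w Q := by
  have h := CW_sub_EW x w hw Q hQ
  have hnn : 0 ≤ CW x w Q - EW x w Q := by
    rw [h]
    refine Finset.sum_nonneg fun j _ => Finset.sum_nonneg fun i _ =>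
      mul_nonneg (hw i j) (by positivity)
  linarith

lemma colconst_of_CW_eq (hw : ∀ i j, 0 ≤ w i j) (Q : EuclideanSpace ℝ (Fin m) → ℝ)
    (hQ : ∀ z, Q z = -‖z‖^2) (h : CW x w Q = EW x w Q) :
    ∀ i j, 0 < w i j → x i j = colAvg x w j := by
  intro i j hij
  have hsum0 : ∑ j ∈ Finset.univ.filter (fun j => 0 < colMarg w j),
      ∑ i, w i j * ‖x i j - colAvg x w j‖^2 = 0 := by
    rw [← CW_sub_EW x w hw Q hQ, h, sub_self]
  have hjf : j ∈ Finset.univ.filter (fun j => 0 < colMarg w j) := by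
    simp only [Finset.mem_filter, Finset.mem_univ, true_and]
    exact colMarg_pos_of_w_pos w hw hij
  have h1 : ∑ i, w i j * ‖x i j - colAvg x w j‖^2 = 0 :=
    (Finset.sum_eq_zero_iff_of_nonneg (fun j _ => Finset.sum_nonneg fun i _ =>
      mul_nonneg (hw i j) (by positivity))).1 hsum0 j hjf
  have h2 : w i j * ‖x i j - colAvg x w j‖^2 = 0 :=
    (Finset.sum_eq_zero_iff_of_nonneg (fun i _ =>
      mul_nonneg (hw i j) (by positivity))).1 h1 i (Finset.mem_univ i)
  have h3 : ‖x i j - colAvg x w j‖^2 = 0 := by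
    rcases mul_eq_zero.1 h2 with h' | h'
    · exact absurd h' hij.ne'
    · exact h'
  have h4 : x i j - colAvg x w j = 0 := by
    rwa [pow_eq_zero_iff (two_ne_zero), norm_eq_zero] at h3
  exact sub_eq_zero.1 h4

lemma CW_eq_EW_of_colconst (hw : ∀ i j, 0 ≤ w i j)
    (h : ∀ i j, 0 < w i j → x i j = colAvg x w j) (F : EuclideanSpace ℝ (Fin m) → ℝ) :
    CW x w F = EW x w F := by
  have hE : EW x w F = ∑ j, ∑ i, w i j * F (x i j) := Finset.sum_comm
  rw [hE, ← Finset.sum_filter_add_sum_filter_not Finset.univ (fun j => 0 < colMarg w j)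
      (fun j => ∑ i, w i j * F (x i j))]
  have hrest : ∑ j ∈ Finset.univ.filter (fun j => ¬ 0 < colMarg w j),
      ∑ i, w i j * F (x i j) = 0 := by
    refine Finset.sum_eq_zero fun j hj => Finset.sum_eq_zero fun i _ => ?_
    rw [colMarg_zero w hw j (Finset.mem_filter.1 hj).2 i, zero_mul]
  rw [hrest, add_zero]
  unfold CW
  refine Finset.sum_congr rfl fun j hj => ?_
  have : ∑ i, w i j * F (x i j) = ∑ i, w i j * F (colAvg x w j) := by
    refine Finset.sum_congr rfl fun i _ => ?_
    rcases (hw i j).eq_or_lt with h' | h'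
    · rw [← h', zero_mul, zero_mul]
    · rw [h i j h']
  rw [this, ← Finset.sum_mul]
  rfl

lemma EW_le_RW_concave (hw : IsWeight w) (F : EuclideanSpace ℝ (Fin m) → ℝ)
    (hF : ConcaveOn ℝ (convexHull ℝ (entries x)) F) : EW x w F ≤ RW x w F := by
  unfold EW RW
  rw [← Finset.sum_filter_add_sum_filter_not Finset.univ (fun i => 0 < rowMarg w i)
      (fun i => ∑ j, w i j * F (x i j))]
  have hrest : ∑ i ∈ Finset.univ.filter (fun i => ¬ 0 < rowMarg w i),
      ∑ j, w i j * F (x i j) = 0 := by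
    refine Finset.sum_eq_zero fun i hi => Finset.sum_eq_zero fun j _ => ?_
    have h0 : rowMarg w i = 0 :=
      le_antisymm (not_lt.1 (Finset.mem_filter.1 hi).2)
        (Finset.sum_nonneg fun j _ => hw.1 i j)
    have : w i j = 0 :=
      (Finset.sum_eq_zero_iff_of_nonneg (fun j _ => hw.1 i j)).1 h0 j (Finset.mem_univ j)
    rw [this, zero_mul]
  rw [hrest, add_zero]
  refine Finset.sum_le_sum fun i hi => ?_
  have hμ : 0 < rowMarg w i := (Finset.mem_filter.1 hi).2
  have h1 : ∑ j, (w i j / rowMarg w i) • F (x i j)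
      ≤ F (∑ j, (w i j / rowMarg w i) • x i j) := by
    refine hF.le_map_sum (fun j _ => div_nonneg (hw.1 i j) hμ.le) ?_
      (fun j _ => subset_convexHull ℝ _ ⟨i, j, rfl⟩)
    rw [← Finset.sum_div]
    exact div_self hμ.ne'
  have h2 : ∑ j, (w i j / rowMarg w i) • x i j = rowAvg x w i := by
    unfold rowAvg
    rw [Finset.smul_sum]
    refine Finset.sum_congr rfl fun j _ => ?_
    rw [div_eq_inv_mul, mul_smul]
  rw [h2] at h1
  calc ∑ j, w i j * F (x i j)
      = rowMarg w i * ∑ j, (w i j / rowMarg w i) • F (x i j) := by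
        rw [Finset.mul_sum]
        refine Finset.sum_congr rfl fun j _ => ?_
        rw [smul_eq_mul, ← mul_assoc, mul_div_cancel₀ _ hμ.ne']
    _ ≤ rowMarg w i * F (rowAvg x w i) := mul_le_mul_of_nonneg_left h1 hμ.le

end lemmas

section geom
variable {m : ℕ}

lemma normsq_combo (α β : ℝ) (X Y : EuclideanSpace ℝ (Fin m)) :
    ‖α • X + β • Y‖^2 = (α+β)*(α*‖X‖^2+β*‖Y‖^2) - α*β*‖X-Y‖^2 := by
  rw [norm_add_sq_real, norm_sub_sq_real, norm_smul, norm_smul,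
    real_inner_smul_left, real_inner_smul_right, mul_pow, mul_pow, Real.norm_eq_abs, Real.norm_eq_abs, sq_abs, sq_abs]
  ring

lemma concave_neg_normsq :
    ConcaveOn ℝ (Set.univ) (fun z : EuclideanSpace ℝ (Fin m) => -‖z‖^2) := by
  refine ⟨convex_univ, ?_⟩
  intro X _ Y _ a b ha hb hab
  have h := normsq_combo (m := m) a b X Y
  have h2 : 0 ≤ a*b*‖X-Y‖^2 := by positivity
  simp only [smul_eq_mul]
  nlinarith [h]

lemma concaveOn_min_affine (u : EuclideanSpace ℝ (Fin m)) (θ : ℝ) :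
    ConcaveOn ℝ (Set.univ) (fun z => min 0 (⟪u, z⟫ - θ)) := by
  have h1 : ConcaveOn ℝ (Set.univ) (fun _ : EuclideanSpace ℝ (Fin m) => (0:ℝ)) :=
    concaveOn_const _ convex_univ
  have h2 : ConcaveOn ℝ (Set.univ) (fun z : EuclideanSpace ℝ (Fin m) => ⟪u, z⟫ - θ) := by
    refine ⟨convex_univ, ?_⟩
    intro X _ Y _ a b ha hb hab
    simp only [inner_add_right, real_inner_smul_right, smul_eq_mul]
    have e : a*(⟪u,X⟫-θ)+b*(⟪u,Y⟫-θ) = a*⟪u,X⟫+b*⟪u,Y⟫-(a+b)*θ := by ring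
    rw [e, hab, one_mul]
  have h3 := h1.inf h2
  have he : (fun z : EuclideanSpace ℝ (Fin m) => min 0 (⟪u, z⟫ - θ))
      = ((fun _ => (0:ℝ)) ⊓ (fun z => ⟪u, z⟫ - θ)) := by
    funext z; simp [Pi.inf_apply]
  rw [he]; exact h3

lemma pos_inner_or_ray {v₁ v₂ : EuclideanSpace ℝ (Fin m)} (h1 : v₁ ≠ 0) (h2 : v₂ ≠ 0) :
    (∃ u : EuclideanSpace ℝ (Fin m), 0 < ⟪u, v₁⟫ ∧ 0 < ⟪u, v₂⟫)
      ∨ ∃ lam : ℝ, 0 < lam ∧ v₂ = -(lam • v₁) := by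
  have hv1 : (0:ℝ) < ‖v₁‖ := norm_pos_iff.2 h1
  have hv2 : (0:ℝ) < ‖v₂‖ := norm_pos_iff.2 h2
  by_cases h : ‖-v₂‖ • v₁ = ‖v₁‖ • (-v₂)
  · right
    rw [norm_neg, smul_neg] at h
    have h3 : (‖v₁‖⁻¹ * ‖v₂‖) • v₁ = -v₂ := by
      rw [← smul_smul, h, smul_neg, inv_smul_smul₀ hv1.ne']
    refine ⟨‖v₂‖/‖v₁‖, by positivity, ?_⟩
    rw [div_eq_inv_mul, h3, neg_neg]
  · left
    have hlt : ⟪v₁, -v₂⟫ < ‖v₁‖ * ‖-v₂‖ := inner_lt_norm_mul_iff_real.2 h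
    rw [inner_neg_right, norm_neg] at hlt
    have hK : -(‖v₁‖*‖v₂‖) < ⟪v₁, v₂⟫ := by linarith
    have key1 := mul_lt_mul_of_pos_left hK (inv_pos.2 hv2)
    have e1 : ‖v₂‖⁻¹ * -(‖v₁‖*‖v₂‖) = -‖v₁‖ := by field_simp [mul_comm]
    rw [e1] at key1
    have key2 := mul_lt_mul_of_pos_left hK (inv_pos.2 hv1)
    have e2 : ‖v₁‖⁻¹ * -(‖v₁‖*‖v₂‖) = -‖v₂‖ := by field_simp [mul_comm]
    rw [e2] at key2
    refine ⟨‖v₁‖⁻¹ • v₁ + ‖v₂‖⁻¹ • v₂, ?_, ?_⟩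
    · rw [inner_add_left, real_inner_smul_left, real_inner_smul_left,
        real_inner_self_eq_norm_sq, real_inner_comm v₁ v₂]
      have e3 : ‖v₁‖⁻¹ * ‖v₁‖^2 = ‖v₁‖ := by rw [pow_two, ← mul_assoc, inv_mul_cancel₀ hv1.ne', one_mul]
      rw [e3]; linarith
    · rw [inner_add_left, real_inner_smul_left, real_inner_smul_left,
        real_inner_self_eq_norm_sq]
      have e4 : ‖v₂‖⁻¹ * ‖v₂‖^2 = ‖v₂‖ := by rw [pow_two, ← mul_assoc, inv_mul_cancel₀ hv2.ne', one_mul]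
      rw [e4]; linarith

end geom

section construction
variable (x : I → J → EuclideanSpace ℝ (Fin m))

set_option maxHeartbeats 1000000 in
lemma construction (Q : EuclideanSpace ℝ (Fin m) → ℝ) (hQ : ∀ z, Q z = -‖z‖^2)
    (i i' : I) (j j' : J) (hii : i ≠ i') (hjj : j ≠ j')
    (p q s θ : ℝ) (u : EuclideanSpace ℝ (Fin m))
    (hp : 0 < p) (hq : 0 < q) (hs : 0 < s) (hsum : p + q + s = 1)
    (hvar : p*q*(p+s)*‖x i j - x i' j‖^2 ≤ p*s*(p+q)*‖x i j - x i j'‖^2)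
    (hc1 : θ*(p+q) ≤ p*⟪u, x i j⟫ + q*⟪u, x i' j⟫)
    (hPr : θ ≤ ⟪u, x i j'⟫)
    (hlow : ⟪u, x i' j⟫ < θ ∨ p*⟪u, x i j⟫ + s*⟪u, x i j'⟫ < θ*(p+s)) :
    ∃ (w : I → J → ℝ) (F : EuclideanSpace ℝ (Fin m) → ℝ),
      IsWeight w ∧ CW x w Q ≤ RW x w Q ∧
      ConcaveOn ℝ (convexHull ℝ (entries x)) F ∧ RW x w F < CW x w F := by
  set A := x i j with hA
  set B := x i' j with hB
  set D := x i j' with hD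
  set w : I → J → ℝ := fun a b =>
    (if a = i then (if b = j then p else 0) + (if b = j' then s else 0) else 0)
      + (if a = i' then (if b = j then q else 0) else 0) with hw
  have hpq : 0 < p + q := by linarith
  have hps : 0 < p + s := by linarith
  -- weight nonneg
  have hw0 : ∀ a b, 0 ≤ w a b := by
    intro a b
    simp only [hw]
    split_ifs <;> linarith
  -- row marginals
  have hrm : ∀ a, rowMarg w a = (if a = i then p + s else 0) + (if a = i' then q else 0) := by
    intro a
    unfold rowMarg
    simp only [hw]
    rw [Finset.sum_add_distrib]
    congr 1
    · by_cases ha : a = i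
      · simp only [ha, if_true]
        rw [Finset.sum_add_distrib]
        simp [Finset.sum_ite_eq']
      · simp [ha]
    · by_cases ha : a = i'
      · simp [ha, Finset.sum_ite_eq']
      · simp [ha]
  have hcm : ∀ b, colMarg w b = (if b = j then p + q else 0) + (if b = j' then s else 0) := by
    intro b
    unfold colMarg
    simp only [hw]
    rw [Finset.sum_add_distrib]
    have e1 : ∑ a : I, (if a = i then (if b = j then p else 0) + (if b = j' then s else 0) else 0)
        = (if b = j then p else 0) + (if b = j' then s else 0) := by
      simp [Finset.sum_ite_eq']
    have e2 : ∑ a : I, (if a = i' then (if b = j then q else 0) else 0)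
        = (if b = j then q else 0) := by
      simp [Finset.sum_ite_eq']
    rw [e1, e2]
    split_ifs <;> ring
  -- weighted sums of vectors
  have hvr : ∀ a, (∑ b, w a b • x a b)
      = (if a = i then p • A + s • D else 0) + (if a = i' then q • B else 0) := by
    intro a
    by_cases ha : a = i
    · subst ha
      simp only [hw, hii, if_true, if_false, eq_self_iff_true, ite_true, ite_false, add_zero]
      simp [add_smul, ite_smul, zero_smul, Finset.sum_add_distrib, Finset.sum_ite_eq',
        ← hA, ← hD, hii]
    · by_cases ha' : a = i'
      · subst ha'
        simp only [hw, Ne.symm hii, if_true, if_false, eq_self_iff_true, ite_true, ite_false,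
          zero_add]
        simp [ite_smul, zero_smul, Finset.sum_ite_eq', ← hB, Ne.symm hii]
      · simp [hw, ha, ha']
  have hvc : ∀ b, (∑ a, w a b • x a b)
      = (if b = j then p • A + q • B else 0) + (if b = j' then s • D else 0) := by
    intro b
    simp only [hw]
    have e : ∀ a, ((if a = i then (if b = j then p else 0) + (if b = j' then s else 0) else 0)
        + (if a = i' then (if b = j then q else 0) else 0)) • x a b
        = (if a = i then ((if b = j then p else 0) + (if b = j' then s else 0)) • x a b else 0)
          + (if a = i' then (if b = j then q else 0) • x a b else 0) := by
      intro a
      simp only [add_smul, ite_smul, zero_smul]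
    rw [Finset.sum_congr rfl fun a _ => e a, Finset.sum_add_distrib]
    rw [Finset.sum_ite_eq' Finset.univ i
      (fun a => ((if b = j then p else 0) + (if b = j' then s else 0)) • x a b)]
    rw [Finset.sum_ite_eq' Finset.univ i' (fun a => (if b = j then q else 0) • x a b)]
    simp only [Finset.mem_univ, if_true]
    by_cases hbj : b = j
    · subst hbj
      simp [hjj, add_smul, ← hA, ← hB]
    · by_cases hbj' : b = j'
      · subst hbj'
        simp [Ne.symm hjj, hbj, ← hD]
      · simp [hbj, hbj']
  -- marginal values
  have hrmi : rowMarg w i = p + s := by rw [hrm i]; simp [hii]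
  have hrmi' : rowMarg w i' = q := by rw [hrm i']; simp [Ne.symm hii]
  have hcmj : colMarg w j = p + q := by rw [hcm j]; simp [hjj]
  have hcmj' : colMarg w j' = s := by rw [hcm j']; simp [Ne.symm hjj]
  -- filters
  have hfr : Finset.univ.filter (fun a => 0 < rowMarg w a) = {i, i'} := by
    ext a
    simp only [Finset.mem_filter, Finset.mem_univ, true_and, Finset.mem_insert,
      Finset.mem_singleton]
    constructor
    · intro hpos
      by_contra hcon
      push_neg at hcon
      rw [hrm a] at hpos
      simp [hcon.1, hcon.2] at hpos
    · rintro (rfl | rfl)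
      · rw [hrmi]; linarith
      · rw [hrmi']; linarith
  have hfc : Finset.univ.filter (fun b => 0 < colMarg w b) = {j, j'} := by
    ext b
    simp only [Finset.mem_filter, Finset.mem_univ, true_and, Finset.mem_insert,
      Finset.mem_singleton]
    constructor
    · intro hpos
      by_contra hcon
      push_neg at hcon
      rw [hcm b] at hpos
      simp [hcon.1, hcon.2] at hpos
    · rintro (rfl | rfl)
      · rw [hcmj]; linarith
      · rw [hcmj']; linarith
  -- row/col averages
  have hravgi : rowAvg x w i = (p+s)⁻¹ • (p • A + s • D) := by
    unfold rowAvg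
    rw [hrmi, hvr i]
    simp [hii]
  have hravgi' : rowAvg x w i' = B := by
    unfold rowAvg
    rw [hrmi', hvr i']
    simp only [Ne.symm hii, if_false, if_true, zero_add]
    rw [inv_smul_smul₀ hq.ne']
  have hcavgj : colAvg x w j = (p+q)⁻¹ • (p • A + q • B) := by
    unfold colAvg
    rw [hcmj, hvc j]
    simp [hjj]
  have hcavgj' : colAvg x w j' = D := by
    unfold colAvg
    rw [hcmj', hvc j']
    simp only [Ne.symm hjj, if_false, if_true, zero_add]
    rw [inv_smul_smul₀ hs.ne']
  -- RW and CW for any function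
  have hRW : ∀ G : EuclideanSpace ℝ (Fin m) → ℝ,
      RW x w G = (p+s) * G ((p+s)⁻¹ • (p • A + s • D)) + q * G B := by
    intro G
    unfold RW
    rw [hfr, Finset.sum_pair hii, hrmi, hrmi', hravgi, hravgi']
  have hCW : ∀ G : EuclideanSpace ℝ (Fin m) → ℝ,
      CW x w G = (p+q) * G ((p+q)⁻¹ • (p • A + q • B)) + s * G D := by
    intro G
    unfold CW
    rw [hfc, Finset.sum_pair hjj, hcmj, hcmj', hcavgj, hcavgj']
  -- IsWeight
  have hweight : IsWeight w := by
    refine ⟨hw0, ?_⟩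
    have : ∀ a, ∑ b, w a b = rowMarg w a := fun a => rfl
    rw [Finset.sum_congr rfl fun a _ => this a]
    rw [Finset.sum_congr rfl fun a _ => hrm a]
    rw [Finset.sum_add_distrib]
    simp [Finset.sum_ite_eq']
    linarith
  -- CW Q ≤ RW Q
  have hQle : CW x w Q ≤ RW x w Q := by
    rw [hRW Q, hCW Q]
    simp only [hQ]
    have hnormr : (p+s) * ‖(p+s)⁻¹ • (p • A + s • D)‖^2
        = p*‖A‖^2 + s*‖D‖^2 - (p*s*‖A - D‖^2)/(p+s) := by
      rw [norm_smul, mul_pow, Real.norm_eq_abs, sq_abs, normsq_combo]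
      field_simp
    have hnormc : (p+q) * ‖(p+q)⁻¹ • (p • A + q • B)‖^2
        = p*‖A‖^2 + q*‖B‖^2 - (p*q*‖A - B‖^2)/(p+q) := by
      rw [norm_smul, mul_pow, Real.norm_eq_abs, sq_abs, normsq_combo]
      field_simp
    have hdiv : (p*q*‖A - B‖^2)/(p+q) ≤ (p*s*‖A - D‖^2)/(p+s) := by
      rw [div_le_div_iff₀ hpq hps]
      nlinarith [hvar]
    have g1 : (p+q) * -‖(p+q)⁻¹ • (p • A + q • B)‖^2
        = -((p+q) * ‖(p+q)⁻¹ • (p • A + q • B)‖^2) := by ring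
    have g2 : (p+s) * -‖(p+s)⁻¹ • (p • A + s • D)‖^2
        = -((p+s) * ‖(p+s)⁻¹ • (p • A + s • D)‖^2) := by ring
    rw [g1, g2, hnormc, hnormr]
    linarith [hdiv]
  -- the concave function
  set F : EuclideanSpace ℝ (Fin m) → ℝ := fun z => min 0 (⟪u, z⟫ - θ) with hF
  have hFconc : ConcaveOn ℝ (convexHull ℝ (entries x)) F :=
    (concaveOn_min_affine u θ).subset (Set.subset_univ _) (convex_convexHull ℝ _)
  have hFle : ∀ z, F z ≤ 0 := fun z => min_le_left _ _
  -- CW F = 0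
  have hinnc : ⟪u, (p+q)⁻¹ • (p • A + q • B)⟫ = (p+q)⁻¹ * (p*⟪u, A⟫ + q*⟪u, B⟫) := by
    rw [real_inner_smul_right, inner_add_right, real_inner_smul_right, real_inner_smul_right]
  have hinnr : ⟪u, (p+s)⁻¹ • (p • A + s • D)⟫ = (p+s)⁻¹ * (p*⟪u, A⟫ + s*⟪u, D⟫) := by
    rw [real_inner_smul_right, inner_add_right, real_inner_smul_right, real_inner_smul_right]
  have hFc1 : F ((p+q)⁻¹ • (p • A + q • B)) = 0 := by
    rw [hF]
    refine min_eq_left ?_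
    rw [hinnc, sub_nonneg]
    have h' : θ*(p+q)*(p+q)⁻¹ ≤ (p*⟪u, A⟫ + q*⟪u, B⟫)*(p+q)⁻¹ :=
      mul_le_mul_of_nonneg_right hc1 (by positivity)
    have e : θ*(p+q)*(p+q)⁻¹ = θ := by field_simp
    rw [e] at h'
    nlinarith [h']
  have hFD : F D = 0 := by
    rw [hF]
    exact min_eq_left (by simp only [sub_nonneg]; exact hPr)
  have hCWF : CW x w F = 0 := by
    rw [hCW F, hFc1, hFD, mul_zero, mul_zero, add_zero]
  -- RW F < 0
  have hRWF : RW x w F < 0 := by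
    rw [hRW F]
    rcases hlow with hl | hl
    · have h1 : F B < 0 := by
        rw [hF]
        have : ⟪u, B⟫ - θ < 0 := by linarith
        exact lt_of_le_of_lt (min_le_right _ _) this
      have h2 : (p+s) * F ((p+s)⁻¹ • (p • A + s • D)) ≤ 0 :=
        mul_nonpos_of_nonneg_of_nonpos hps.le (hFle _)
      nlinarith [h1, h2]
    · have h1 : F ((p+s)⁻¹ • (p • A + s • D)) < 0 := by
        rw [hF]
        have hval : ⟪u, (p+s)⁻¹ • (p • A + s • D)⟫ - θ < 0 := by
          rw [hinnr]
          have : (p+s)⁻¹ * (p*⟪u, A⟫ + s*⟪u, D⟫) < (p+s)⁻¹ * (θ*(p+s)) := by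
            apply mul_lt_mul_of_pos_left _ (by positivity)
            linarith
          have e : (p+s)⁻¹ * (θ*(p+s)) = θ := by field_simp
          linarith [e ▸ this]
        exact lt_of_le_of_lt (min_le_right _ _) hval
      have h2 : q * F B ≤ 0 := mul_nonpos_of_nonneg_of_nonpos hq.le (hFle _)
      nlinarith [h1, h2]
  exact ⟨w, F, hweight, hQle, hFconc, by rw [hCWF]; exact hRWF⟩

end construction

section instantiation
variable (x : I → J → EuclideanSpace ℝ (Fin m))

set_option maxHeartbeats 1000000 in
lemma goodL_violation (Q : EuclideanSpace ℝ (Fin m) → ℝ) (hQ : ∀ z, Q z = -‖z‖^2)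
    (i i' : I) (j j' : J) (h1 : x i j ≠ x i' j) (h2 : x i j ≠ x i j')
    (h3 : x i' j ≠ x i j') :
    ∃ (w : I → J → ℝ) (F : EuclideanSpace ℝ (Fin m) → ℝ),
      IsWeight w ∧ CW x w Q ≤ RW x w Q ∧
      ConcaveOn ℝ (convexHull ℝ (entries x)) F ∧ RW x w F < CW x w F := by
  have hii : i ≠ i' := fun e => h1 (by rw [e])
  have hjj : j ≠ j' := fun e => h2 (by rw [e])
  have hX : (0:ℝ) < ‖x i j - x i' j‖^2 := by
    have h0 : x i j - x i' j ≠ 0 := sub_ne_zero.2 h1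
    exact pow_pos (norm_pos_iff.2 h0) 2
  have hY : (0:ℝ) < ‖x i j - x i j'‖^2 := by
    have h0 : x i j - x i j' ≠ 0 := sub_ne_zero.2 h2
    exact pow_pos (norm_pos_iff.2 h0) 2
  obtain ⟨X, hXdef⟩ : ∃ t : ℝ, t = ‖x i j - x i' j‖^2 := ⟨_, rfl⟩
  obtain ⟨Y, hYdef⟩ : ∃ t : ℝ, t = ‖x i j - x i j'‖^2 := ⟨_, rfl⟩
  have hX' : 0 < X := hXdef ▸ hX
  have hY' : 0 < Y := hYdef ▸ hY
  rcases pos_inner_or_ray (sub_ne_zero.2 h1) (sub_ne_zero.2 (Ne.symm h3))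
    with ⟨u, hu1, hu2⟩ | ⟨lam, hlam, heq⟩
  · -- corner case
    rw [inner_sub_right] at hu1 hu2
    obtain ⟨πA, hπA⟩ : ∃ t : ℝ, t = ⟪u, x i j⟫ := ⟨_, rfl⟩
    obtain ⟨πB, hπB⟩ : ∃ t : ℝ, t = ⟪u, x i' j⟫ := ⟨_, rfl⟩
    obtain ⟨πD, hπD⟩ : ∃ t : ℝ, t = ⟪u, x i j'⟫ := ⟨_, rfl⟩
    have ha : πB < πA := by rw [hπA, hπB]; linarith
    have hb : πB < πD := by rw [hπB, hπD]; linarith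
    obtain ⟨ρ, hρdef⟩ : ∃ t : ℝ, t = Y/(2*X+2*Y) := ⟨_, rfl⟩
    have hden : (0:ℝ) < 2*X+2*Y := by linarith
    have hρ : 0 < ρ := by rw [hρdef]; positivity
    have hρ1 : ρ < 1 := by
      rw [hρdef, div_lt_one hden]; linarith
    have hρeq : ρ*(2*X+2*Y) = Y := by
      rw [hρdef]; field_simp
    obtain ⟨p, hpdef⟩ : ∃ t : ℝ, t = (2+ρ)⁻¹ := ⟨_, rfl⟩
    have h2ρ : (0:ℝ) < 2+ρ := by linarith
    have hp : 0 < p := by rw [hpdef]; positivity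
    have hpmul : p*(2+ρ) = 1 := by rw [hpdef]; exact inv_mul_cancel₀ h2ρ.ne'
    obtain ⟨mn, hmn⟩ : ∃ t : ℝ, t = min (πA - πB) (πD - πB) := ⟨_, rfl⟩
    have hmn1 : mn ≤ πA - πB := by rw [hmn]; exact min_le_left _ _
    have hmn2 : mn ≤ πD - πB := by rw [hmn]; exact min_le_right _ _
    have hmn0 : 0 < mn := by rw [hmn]; exact lt_min (by linarith) (by linarith)
    refine construction x Q hQ i i' j j' hii hjj p (ρ*p) p (πB + mn/2) u hp
      (by positivity) hp ?_ ?_ ?_ ?_ ?_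
    · linear_combination hpmul
    · -- variance
      rw [← hXdef, ← hYdef]
      have key : 2*ρ*X ≤ (1+ρ)*Y := by
        nlinarith [mul_nonneg hρ.le hY'.le, hρeq]
      nlinarith [mul_le_mul_of_nonneg_left key (by positivity : (0:ℝ) ≤ p^3)]
    · -- hc1
      rw [← hπA, ← hπB]
      have key1 : (ρ*p)*(mn/2) ≤ p*(mn/2) := by
        apply mul_le_mul_of_nonneg_right _ (by linarith)
        nlinarith [hp, hρ1]
      have key2 : p*(mn/2) ≤ p*((πA - πB) - mn/2) :=
        mul_le_mul_of_nonneg_left (by linarith) hp.le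
      nlinarith [key1, key2]
    · -- hPr
      rw [← hπD]
      linarith
    · -- hlow
      left
      rw [← hπB]
      linarith
  · -- ray case
    have hDB : x i j' - x i' j = lam • (x i' j - x i j) := by
      rw [heq, ← smul_neg, neg_sub]
    have hDA : x i j' - x i j = (1+lam) • (x i' j - x i j) := by
      rw [add_smul, one_smul, ← hDB]; abel
    obtain ⟨u, hu⟩ : ∃ v : EuclideanSpace ℝ (Fin m), v = x i' j - x i j := ⟨_, rfl⟩
    obtain ⟨N, hN⟩ : ∃ t : ℝ, t = ‖x i' j - x i j‖^2 := ⟨_, rfl⟩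
    have hNpos : (0:ℝ) < N := by rw [hN, norm_sub_rev]; exact hX
    have hinnN : ⟪u, u⟫ = N := by
      rw [hN, hu]; exact real_inner_self_eq_norm_sq _
    have e0 : ⟪u, x i' j - x i j⟫ = N := by rw [← hu]; exact hinnN
    have hπB : ⟪u, x i' j⟫ = ⟪u, x i j⟫ + N := by
      rw [inner_sub_right] at e0; linarith
    obtain ⟨κ, hκ⟩ : ∃ t : ℝ, t = 1 + lam := ⟨_, rfl⟩
    have hκ1 : 1 < κ := by rw [hκ]; linarith
    have hπD : ⟪u, x i j'⟫ = ⟪u, x i j⟫ + κ*N := by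
      have e1 : ⟪u, x i j' - x i j⟫ = κ * N := by
        rw [hDA, ← hκ, ← hu, real_inner_smul_right, hinnN]
      rw [inner_sub_right] at e1; linarith
    have hYeq : ‖x i j - x i j'‖^2 = κ^2*N := by
      rw [norm_sub_rev, hDA, ← hκ, norm_smul, mul_pow, Real.norm_eq_abs, sq_abs, ← hN]
    have hXeq : ‖x i j - x i' j‖^2 = N := by rw [norm_sub_rev, ← hN]
    have hdenκ : (0:ℝ) < κ^2+κ-1 := by nlinarith
    obtain ⟨σ, hσ⟩ : ∃ t : ℝ, t = (κ^2+κ-1)⁻¹ := ⟨_, rfl⟩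
    have hσpos : 0 < σ := by rw [hσ]; positivity
    have hσeq : σ*(κ^2+κ-1) = 1 := by rw [hσ]; exact inv_mul_cancel₀ hdenκ.ne'
    obtain ⟨p, hpdef⟩ : ∃ t : ℝ, t = (2+σ)⁻¹ := ⟨_, rfl⟩
    have h2σ : (0:ℝ) < 2+σ := by linarith
    have hp : 0 < p := by rw [hpdef]; positivity
    have hpmul : p*(2+σ) = 1 := by rw [hpdef]; exact inv_mul_cancel₀ h2σ.ne'
    refine construction x Q hQ i i' j j' hii hjj p p (σ*p) (⟪u, x i j⟫ + N/2) u hp hp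
      (by positivity) ?_ ?_ ?_ ?_ ?_
    · linear_combination hpmul
    · -- variance
      rw [hXeq, hYeq]
      have hκ0 : (0:ℝ) ≤ κ := by linarith
      have this1 : 1+σ ≤ 2*σ*κ^2 := by
        nlinarith [hσeq, mul_nonneg (mul_nonneg hσpos.le hκ0) (by linarith : (0:ℝ) ≤ κ-1)]
      have key : (1+σ)*N ≤ (2*σ*κ^2)*N := mul_le_mul_of_nonneg_right this1 hNpos.le
      nlinarith [mul_le_mul_of_nonneg_left key (by positivity : (0:ℝ) ≤ p^3)]
    · -- hc1 : equality
      rw [hπB]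
      apply le_of_eq
      ring
    · -- hPr
      rw [hπD]
      nlinarith [hNpos, hκ1]
    · -- hlow
      right
      rw [hπD]
      have k1 : 0 < p*N*(σ*κ*(κ-1)) :=
        mul_pos (mul_pos hp hNpos)
          (mul_pos (mul_pos hσpos (by linarith)) (by linarith))
      have hs2 : p*N*(1+σ) = p*N*(σ*κ^2+σ*κ) := by
        have hs1 : 1+σ = σ*κ^2+σ*κ := by linear_combination -hσeq
        rw [hs1]
      nlinarith [k1, hs2]

end instantiation

section combinatorial
variable (x : I → J → EuclideanSpace ℝ (Fin m))

lemma exists_third {A B : EuclideanSpace ℝ (Fin m)}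
    (hnondeg : ∃ i₁ j₁ i₂ j₂ i₃ j₃,
      x i₁ j₁ ≠ x i₂ j₂ ∧ x i₁ j₁ ≠ x i₃ j₃ ∧ x i₂ j₂ ≠ x i₃ j₃) :
    ∃ a b, x a b ≠ A ∧ x a b ≠ B := by
  obtain ⟨a1, b1, a2, b2, a3, b3, h12, h13, h23⟩ := hnondeg
  by_cases k1 : x a1 b1 ≠ A ∧ x a1 b1 ≠ B
  · exact ⟨a1, b1, k1⟩
  by_cases k2 : x a2 b2 ≠ A ∧ x a2 b2 ≠ B
  · exact ⟨a2, b2, k2⟩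
  push_neg at k1 k2
  have v1 : x a1 b1 = A ∨ x a1 b1 = B := by
    by_cases e : x a1 b1 = A
    · exact Or.inl e
    · exact Or.inr (k1 e)
  have v2 : x a2 b2 = A ∨ x a2 b2 = B := by
    by_cases e : x a2 b2 = A
    · exact Or.inl e
    · exact Or.inr (k2 e)
  rcases v1 with e1 | e1 <;> rcases v2 with e2 | e2
  · exact absurd (e1.trans e2.symm) h12
  · exact ⟨a3, b3, fun h => h13 (e1.trans h.symm), fun h => h23 (e2.trans h.symm)⟩
  · exact ⟨a3, b3, fun h => h23 (e2.trans h.symm), fun h => h13 (e1.trans h.symm)⟩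
  · exact absurd (e1.trans e2.symm) h12

lemma exists_goodL (hcol : ∃ i i' j, x i j ≠ x i' j) (hrow : ∃ i j j', x i j ≠ x i j')
    (hnondeg : ∃ i₁ j₁ i₂ j₂ i₃ j₃,
      x i₁ j₁ ≠ x i₂ j₂ ∧ x i₁ j₁ ≠ x i₃ j₃ ∧ x i₂ j₂ ≠ x i₃ j₃) :
    ∃ i i' j j', x i j ≠ x i' j ∧ x i j ≠ x i j' ∧ x i' j ≠ x i j' := by
  by_contra hcon
  push_neg at hcon
  obtain ⟨i, i', j, hAB⟩ := hcol
  obtain ⟨a3, b3, hgA, hgB⟩ := exists_third x (A := x i j) (B := x i' j) hnondeg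
  have step1 : ∀ j', x i j' = x i j ∨ x i j' = x i' j := by
    intro j'
    by_cases e : x i j' = x i j
    · exact Or.inl e
    · exact Or.inr ((hcon i i' j j' hAB (fun h => e h.symm)).symm)
  have step1' : ∀ j', x i' j' = x i' j ∨ x i' j' = x i j := by
    intro j'
    by_cases e : x i' j' = x i' j
    · exact Or.inl e
    · exact Or.inr ((hcon i' i j j' (Ne.symm hAB) (fun h => e h.symm)).symm)
  have step3 : x i b3 = x i j := by
    rcases step1 b3 with e | e
    · exact e
    · exfalso
      have hne1 : x i b3 ≠ x a3 b3 := by rw [e]; exact fun h => hgB h.symm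
      have hne2 : x i b3 ≠ x i j := by rw [e]; exact Ne.symm hAB
      exact hgA (hcon i a3 b3 j hne1 hne2)
  have step3' : x i' b3 = x i' j := by
    rcases step1' b3 with e | e
    · exact e
    · exfalso
      have hne1 : x i' b3 ≠ x a3 b3 := by rw [e]; exact fun h => hgA h.symm
      have hne2 : x i' b3 ≠ x i' j := by rw [e]; exact hAB
      exact hgB (hcon i' a3 b3 j hne1 hne2)
  have step4 : x a3 j = x a3 b3 := by
    by_cases e : x a3 j = x a3 b3
    · exact e
    · exfalso
      have c1 : x a3 b3 ≠ x i b3 := by rw [step3]; exact hgA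
      have c2 : x a3 b3 ≠ x a3 j := fun h => e h.symm
      have r1 : x i b3 = x a3 j := hcon a3 i b3 j c1 c2
      have c1' : x a3 b3 ≠ x i' b3 := by rw [step3']; exact hgB
      have r2 : x i' b3 = x a3 j := hcon a3 i' b3 j c1' c2
      rw [step3] at r1
      rw [step3'] at r2
      exact hAB (r1.trans r2.symm)
  obtain ⟨i0, jA, jB, hde⟩ := hrow
  have hjstar : ∃ js, x i0 js ≠ x i0 j := by
    by_cases e : x i0 jA = x i0 j
    · exact ⟨jB, fun h => hde (e.trans h.symm)⟩
    · exact ⟨jA, e⟩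
  obtain ⟨js, hjs⟩ := hjstar
  have hcolvals : ∃ r1 r2 : I, x r1 j ≠ x i0 j ∧ x r2 j ≠ x i0 j ∧ x r1 j ≠ x r2 j := by
    by_cases e1 : x i0 j = x i j
    · refine ⟨i', a3, ?_, ?_, ?_⟩
      · rw [e1]; exact Ne.symm hAB
      · rw [step4, e1]; exact hgA
      · rw [step4]; exact fun h => hgB h.symm
    · by_cases e2 : x i0 j = x i' j
      · refine ⟨i, a3, ?_, ?_, ?_⟩
        · rw [e2]; exact hAB
        · rw [step4, e2]; exact hgB
        · rw [step4]; exact fun h => hgA h.symm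
      · exact ⟨i, i', fun h => e1 h.symm, fun h => e2 h.symm, hAB⟩
  obtain ⟨r1, r2, hr1, hr2, hr12⟩ := hcolvals
  have q1 : x r1 j = x i0 js := hcon i0 r1 j js (fun h => hr1 h.symm) (fun h => hjs h.symm)
  have q2 : x r2 j = x i0 js := hcon i0 r2 j js (fun h => hr2 h.symm) (fun h => hjs h.symm)
  exact hr12 (q1.trans q2.symm)

lemma colAvg_const (w : I → J → ℝ) (hw0 : ∀ i j, 0 ≤ w i j)
    (hc : ∀ i i' j, x i j = x i' j) :
    ∀ i j, 0 < w i j → x i j = colAvg x w j := by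
  intro i j hij
  have hm : 0 < colMarg w j := colMarg_pos_of_w_pos w hw0 hij
  have hs : ∑ i', w i' j • x i' j = colMarg w j • x i j := by
    rw [Finset.sum_congr rfl (fun i' (_ : i' ∈ Finset.univ) => by rw [hc i' i j])]
    rw [← Finset.sum_smul]
    rfl
  unfold colAvg
  rw [hs, inv_smul_smul₀ hm.ne']

lemma exists_colpair (w : I → J → ℝ) (hw : IsWeight w) (Q : EuclideanSpace ℝ (Fin m) → ℝ)
    (hQ : ∀ z, Q z = -‖z‖^2) (hne : CW x w Q ≠ EW x w Q) :
    ∃ i i' j, x i j ≠ x i' j := by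
  by_contra hc
  push_neg at hc
  exact hne (CW_eq_EW_of_colconst x w hw.1 (colAvg_const x w hw.1 hc) Q)

lemma exists_rowpair (w : I → J → ℝ) (hw : IsWeight w) (Q : EuclideanSpace ℝ (Fin m) → ℝ)
    (hQ : ∀ z, Q z = -‖z‖^2) (hCR : CW x w Q ≤ RW x w Q) (hne : CW x w Q ≠ EW x w Q) :
    ∃ i j j', x i j ≠ x i j' := by
  by_contra hc
  push_neg at hc
  have hEC : EW x w Q ≤ CW x w Q := EW_le_CW_Q x w hw.1 Q hQ
  have hRE : RW x w Q = EW x w Q := by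
    rw [← CW_flip, ← EW_flip]
    exact CW_eq_EW_of_colconst (fun j i => x i j) (fun j i => w i j) (fun j i => hw.1 i j)
      (colAvg_const (fun j i => x i j) (fun j i => w i j) (fun j i => hw.1 i j)
        (fun a a' b => hc b a a')) Q
  exact hne (le_antisymm (hCR.trans hRE.le) hEC)

end combinatorial

/-- for a non-degenerate matrix `x` (at least three distinct
entries) and `Q(z) = −‖z‖²`, the statements (U1), (U2), (U3) are equivalent:
(U1) for every weight matrix `w`, `C_W(Q) ≤ R_W(Q)` implies `C_W(F) ≤ R_W(F)`
for every `F` concave on the convex hull of the entries;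
(U2) for every weight matrix `w`, `C_W(Q) ≤ R_W(Q)` implies `C_W(Q) = E_W(Q)`;
(U3) for every weight matrix `w`, `C_W(Q) ≤ R_W(Q)` implies
`C_W(F) = E_W(F) ≤ R_W(F)` for every such concave `F`. -/
theorem stmt_18 [Nonempty I] [Nonempty J] (hm : 1 ≤ m)
    (x : I → J → EuclideanSpace ℝ (Fin m))
    (hnondeg : ∃ i₁ j₁ i₂ j₂ i₃ j₃,
      x i₁ j₁ ≠ x i₂ j₂ ∧ x i₁ j₁ ≠ x i₃ j₃ ∧ x i₂ j₂ ≠ x i₃ j₃)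
    (Q : EuclideanSpace ℝ (Fin m) → ℝ) (hQ : ∀ z, Q z = -‖z‖ ^ 2) :
    -- (U1) ↔ (U2)
    ((∀ w, IsWeight w → CW x w Q ≤ RW x w Q →
        ∀ F : EuclideanSpace ℝ (Fin m) → ℝ,
          ConcaveOn ℝ (convexHull ℝ (entries x)) F → CW x w F ≤ RW x w F) ↔
     (∀ w, IsWeight w → CW x w Q ≤ RW x w Q → CW x w Q = EW x w Q)) ∧
    -- (U2) ↔ (U3)
    ((∀ w, IsWeight w → CW x w Q ≤ RW x w Q → CW x w Q = EW x w Q) ↔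
     (∀ w, IsWeight w → CW x w Q ≤ RW x w Q →
        ∀ F : EuclideanSpace ℝ (Fin m) → ℝ,
          ConcaveOn ℝ (convexHull ℝ (entries x)) F →
          CW x w F = EW x w F ∧ EW x w F ≤ RW x w F)) := by
  have hQconc : ConcaveOn ℝ (convexHull ℝ (entries x)) Q := by
    have h0 : Q = fun z => -‖z‖^2 := funext hQ
    rw [h0]
    exact concave_neg_normsq.subset (Set.subset_univ _) (convex_convexHull ℝ _)
  have hU2toU3 : (∀ w, IsWeight w → CW x w Q ≤ RW x w Q → CW x w Q = EW x w Q) →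
      ∀ w, IsWeight w → CW x w Q ≤ RW x w Q →
        ∀ F : EuclideanSpace ℝ (Fin m) → ℝ,
          ConcaveOn ℝ (convexHull ℝ (entries x)) F →
          CW x w F = EW x w F ∧ EW x w F ≤ RW x w F := by
    intro hU2 w hw hCR F hF
    have hcc := colconst_of_CW_eq x w hw.1 Q hQ (hU2 w hw hCR)
    exact ⟨CW_eq_EW_of_colconst x w hw.1 hcc F, EW_le_RW_concave x w hw F hF⟩
  have hU1toU2 : (∀ w, IsWeight w → CW x w Q ≤ RW x w Q →
        ∀ F : EuclideanSpace ℝ (Fin m) → ℝ,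
          ConcaveOn ℝ (convexHull ℝ (entries x)) F → CW x w F ≤ RW x w F) →
      (∀ w, IsWeight w → CW x w Q ≤ RW x w Q → CW x w Q = EW x w Q) := by
    intro hU1
    by_contra hcon
    push_neg at hcon
    obtain ⟨w0, hw0, hCR0, hne0⟩ := hcon
    obtain ⟨a, a', b, b', g1, g2, g3⟩ :=
      exists_goodL x (exists_colpair x w0 hw0 Q hQ hne0)
        (exists_rowpair x w0 hw0 Q hQ hCR0 hne0) hnondeg
    obtain ⟨w, F, hw, hCR, hF, hlt⟩ := goodL_violation x Q hQ a a' b b' g1 g2 g3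
    exact absurd (hU1 w hw hCR F hF) (not_le.2 hlt)
  constructor
  · constructor
    · exact hU1toU2
    · intro hU2 w hw hCR F hF
      obtain ⟨h1, h2⟩ := hU2toU3 hU2 w hw hCR F hF
      linarith
  · constructor
    · exact hU2toU3
    · intro hU3 w hw hCR
      exact (hU3 w hw hCR Q hQconc).1
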